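/- arXiv:math/0506135 — 2 statements merged into one kernel-verified Lean document; each statement's English description precedes it below -/
import Mathlib

section
/- Let f : ℝ⁺ → ℝ⁺ be a homeomorphism which is smooth on ℝ⁺ and restricts to a diffeomorphism of (0,∞). If f is non-flat at 0, i.e. some derivative f^(k)(0) is nonzero, then the function f/f', defined on (0,∞), extends to a smooth function on ℝ⁺ = [0,∞). -/
open Set Function
open scoped ContDiff

noncomputable section

/-- `f` is a `Cᵏ` map on the half-line `ℝ⁺ = [0,∞)`: it extends to a `Cᵏ` map
on `(−ε, ∞)` for some `ε > 0`. -/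
def CkOnHalfLine (k : WithTop ℕ∞) (f : ℝ → ℝ) : Prop :=
  ∃ ε : ℝ, 0 < ε ∧ ∃ F : ℝ → ℝ, ContDiffOn ℝ k F (Ioi (-ε)) ∧ EqOn f F (Ici 0)

/-- `f : ℝ⁺ → ℝ⁺` is a homeomorphism of `ℝ⁺ = [0,∞)` which is smooth on `ℝ⁺` and restricts
to a diffeomorphism of `(0,∞)`. -/
structure GoodHalfLineMap (f : ℝ → ℝ) : Prop where
  bijOn : BijOn f (Ici 0) (Ici 0)
  continuousOn : ContinuousOn f (Ici 0)
  smooth : CkOnHalfLine ∞ f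
  bijOn_Ioi : BijOn f (Ioi 0) (Ioi 0)
  deriv_ne : ∀ y : ℝ, 0 < y → deriv f y ≠ 0

/-!
Extend `f` to a smooth `F` on `ℝ`. Since `f 0 = 0` and `f` is non-flat, Hadamard's lemma
`Φ y = y * ∫₀¹ Φ' (t y) dt`, iterated up to the first non-vanishing derivative, gives
`F y = y ^ (k + 1) * G y` with `G` smooth and `G 0 ≠ 0`. Then `F' y = y ^ k * H y` with
`H = (k + 1) G + y G'`, so `f / f' = y G / H` on `(0, ∞)`; the denominator is nonzero at `0`
because `G 0 ≠ 0` and on `(0, ∞)` because `f' ≠ 0` there.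
-/

open Filter Nat

theorem CkOnHalfLine.exists_contDiff_eqOn {k : ℕ∞} {f : ℝ → ℝ} (hf : CkOnHalfLine k f) :
    ∃ F : ℝ → ℝ, ContDiff ℝ k F ∧ EqOn f F (Ici 0) := by
  obtain ⟨ε, hε, F, hF, hfF⟩ := hf
  -- a cutoff equal to `1` on `[-ε/4, ∞)` and to `0` on `(-∞, -ε/2]`
  set χ : ℝ → ℝ := fun x ↦ Real.smoothTransition ((x + ε / 2) / (ε / 4))
  have hχ : ContDiff ℝ k χ :=
    Real.smoothTransition.contDiff.comp ((contDiff_id.add contDiff_const).div_const _)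
  refine ⟨fun x ↦ if -ε < x then χ x * F x else 0, contDiff_iff_contDiffAt.2 fun x ↦ ?_,
    fun x hx ↦ ?_⟩
  · rcases lt_or_ge (-ε) x with hx | hx
    · refine (hχ.contDiffAt.mul (hF.contDiffAt (Ioi_mem_nhds hx))).congr_of_eventuallyEq ?_
      filter_upwards [Ioi_mem_nhds hx] with y hy using if_pos hy
    · refine (contDiffAt_const (c := (0 : ℝ))).congr_of_eventuallyEq ?_
      filter_upwards [Iio_mem_nhds (show x < -ε / 2 by linarith)] with y hy
      have : χ y = 0 := Real.smoothTransition.zero_of_nonpos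
        (div_nonpos_of_nonpos_of_nonneg (by linarith [mem_Iio.1 hy]) (by linarith))
      simp [this]
  · have hχx : χ x = 1 := Real.smoothTransition.one_of_one_le
      ((one_le_div (by linarith)).2 (by linarith [mem_Ici.1 hx]))
    simp [show -ε < x by linarith [mem_Ici.1 hx], hχx, hfF hx]

theorem GoodHalfLineMap.map_zero {f : ℝ → ℝ} (hf : GoodHalfLineMap f) : f 0 = 0 := by
  refine le_antisymm (not_lt.1 fun hpos ↦ ?_) (hf.bijOn.mapsTo self_mem_Ici)
  obtain ⟨y, hy, hfy⟩ := hf.bijOn_Ioi.surjOn hpos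
  exact hy.ne' (hf.bijOn.injOn (mem_Ici.2 hy.le) self_mem_Ici hfy)

theorem ContDiff.iteratedDeriv {g : ℝ → ℝ} (hg : ContDiff ℝ ∞ g) (m : ℕ) :
    ContDiff ℝ ∞ (iteratedDeriv m g) := by
  rw [iteratedDeriv_eq_iterate]
  exact hg.iterate_deriv m

/-- The weights `t ^ n` make this family closed under differentiation in `y`. -/
def hadamardIntegral (g : ℝ → ℝ) (n : ℕ) (y : ℝ) : ℝ :=
  ∫ t in (0 : ℝ)..1, t ^ n * g (t * y)

theorem hasDerivAt_hadamardIntegral {g : ℝ → ℝ} (hg : ContDiff ℝ 1 g) (n : ℕ) (y₀ : ℝ) :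
    HasDerivAt (hadamardIntegral g n) (hadamardIntegral (deriv g) (n + 1) y₀) y₀ := by
  have hcont : ∀ (m : ℕ) {h : ℝ → ℝ}, Continuous h → ∀ y : ℝ,
      Continuous fun t : ℝ ↦ t ^ m * h (t * y) :=
    fun m h hh y ↦ by fun_prop
  obtain ⟨C, hC⟩ := (isCompact_Icc.prod isCompact_Icc).exists_bound_of_continuousOn
    (s := Icc (0 : ℝ) 1 ×ˢ Icc (y₀ - 1) (y₀ + 1))
    (f := fun p : ℝ × ℝ ↦ p.1 ^ (n + 1) * deriv g (p.1 * p.2))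
    (by have := hg.continuous_deriv_one; fun_prop)
  refine (intervalIntegral.hasDerivAt_integral_of_dominated_loc_of_deriv_le
    (F := fun y t ↦ t ^ n * g (t * y)) (F' := fun y t ↦ t ^ (n + 1) * deriv g (t * y))
    (bound := fun _ ↦ C) (Metric.ball_mem_nhds y₀ one_pos)
    (.of_forall fun y ↦ (hcont n hg.continuous y).aestronglyMeasurable)
    ((hcont n hg.continuous y₀).intervalIntegrable 0 1)
    (hcont (n + 1) hg.continuous_deriv_one y₀).aestronglyMeasurable
    (.of_forall fun t ht y hy ↦ hC (t, y) ⟨?_, ?_⟩) intervalIntegrable_const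
    (.of_forall fun t _ y _ ↦ ?_)).2
  · rw [uIoc_of_le zero_le_one] at ht
    exact Ioc_subset_Icc_self ht
  · rw [Metric.mem_ball, Real.dist_eq, abs_lt] at hy
    constructor <;> linarith
  · have := ((hg.differentiable one_ne_zero (t * y)).hasDerivAt.comp y
      ((hasDerivAt_id y).const_mul t)).const_mul (t ^ n)
    exact this.congr_deriv (by ring)

theorem iteratedDeriv_hadamardIntegral {g : ℝ → ℝ} (hg : ContDiff ℝ ∞ g) (n m : ℕ) :
    iteratedDeriv m (hadamardIntegral g n) = hadamardIntegral (iteratedDeriv m g) (n + m) := by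
  induction m with
  | zero => rfl
  | succ m ih =>
    have hgm : ContDiff ℝ 1 (iteratedDeriv m g) :=
      (hg.iteratedDeriv m).of_le (by simp)
    ext y
    rw [iteratedDeriv_succ, ih, (hasDerivAt_hadamardIntegral hgm _ y).deriv, ← iteratedDeriv_succ]
    rfl

theorem ContDiff.hadamardIntegral {g : ℝ → ℝ} (hg : ContDiff ℝ ∞ g) (n : ℕ) :
    ContDiff ℝ ∞ (hadamardIntegral g n) :=
  contDiff_of_differentiable_iteratedDeriv fun m _ ↦ by
    rw [iteratedDeriv_hadamardIntegral hg]
    exact fun y ↦ (hasDerivAt_hadamardIntegral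
      ((hg.iteratedDeriv m).of_le (by simp)) _ y).differentiableAt

theorem mul_hadamardIntegral_deriv {Φ : ℝ → ℝ} (hΦ : ContDiff ℝ 1 Φ) (y : ℝ) :
    y * hadamardIntegral (deriv Φ) 0 y = Φ y - Φ 0 := by
  rcases eq_or_ne y 0 with rfl | hy
  · simp
  have hFTC : ∫ s in (0 : ℝ)..y, deriv Φ s = Φ y - Φ 0 :=
    intervalIntegral.integral_deriv_eq_sub (fun x _ ↦ hΦ.differentiable one_ne_zero x)
      (hΦ.continuous_deriv_one.intervalIntegrable 0 y)
  simp only [hadamardIntegral, pow_zero, one_mul,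
    intervalIntegral.integral_comp_mul_right (deriv Φ) hy, zero_mul, hFTC, smul_eq_mul]
  field_simp

theorem exists_contDiff_eq_mul_of_apply_zero {Φ : ℝ → ℝ} (hΦ : ContDiff ℝ ∞ Φ) (h0 : Φ 0 = 0) :
    ∃ Ψ : ℝ → ℝ, ContDiff ℝ ∞ Ψ ∧ ∀ y, Φ y = y * Ψ y :=
  ⟨hadamardIntegral (deriv Φ) 0, (hΦ.iterate_deriv 1).hadamardIntegral 0, fun y ↦ by
    rw [mul_hadamardIntegral_deriv (hΦ.of_le (by simp)), h0, sub_zero]⟩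

theorem iteratedDeriv_pow_mul_apply_zero {Ψ : ℝ → ℝ} {k : ℕ} (hΨ : ContDiff ℝ k Ψ) :
    iteratedDeriv k (fun y ↦ y ^ k * Ψ y) 0 = k ! * Ψ 0 := by
  rw [iteratedDeriv_fun_mul (by fun_prop) hΨ.contDiffAt, Finset.sum_eq_single k]
  · rw [iteratedDeriv_fun_pow_zero, if_pos rfl]
    simp
  · intro i _ hik
    rw [iteratedDeriv_fun_pow_zero, if_neg hik]
    simp
  · simp

theorem exists_contDiff_eq_pow_mul {Φ : ℝ → ℝ} (hΦ : ContDiff ℝ ∞ Φ) {k : ℕ}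
    (h : ∀ j < k, iteratedDeriv j Φ 0 = 0) :
    ∃ Ψ : ℝ → ℝ, ContDiff ℝ ∞ Ψ ∧ ∀ y, Φ y = y ^ k * Ψ y := by
  induction k with
  | zero => exact ⟨Φ, hΦ, by simp⟩
  | succ k ih =>
    obtain ⟨Ψ, hΨ, hΦΨ⟩ := ih fun j hj ↦ h j (by omega)
    have hΨ0 : Ψ 0 = 0 := by
      have := h k (by omega)
      rw [funext hΦΨ, iteratedDeriv_pow_mul_apply_zero (hΨ.of_le (mod_cast le_top))] at this
      exact (mul_eq_zero.1 this).resolve_left (by positivity)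
    obtain ⟨Ψ', hΨ', hΨΨ'⟩ := exists_contDiff_eq_mul_of_apply_zero hΨ hΨ0
    exact ⟨Ψ', hΨ', fun y ↦ by rw [hΦΨ, hΨΨ']; ring⟩

theorem exists_contDiff_eq_pow_succ_mul {Φ : ℝ → ℝ} (hΦ : ContDiff ℝ ∞ Φ) (h0 : Φ 0 = 0)
    {m : ℕ} (hm : iteratedDeriv m Φ 0 ≠ 0) :
    ∃ (k : ℕ) (G : ℝ → ℝ), ContDiff ℝ ∞ G ∧ G 0 ≠ 0 ∧ ∀ y, Φ y = y ^ (k + 1) * G y := by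
  have hex : ∃ m, iteratedDeriv m Φ 0 ≠ 0 := ⟨m, hm⟩
  obtain ⟨G, hG, hΦG⟩ := exists_contDiff_eq_pow_mul hΦ fun j hj ↦
    not_not.1 (Nat.find_min hex hj)
  have hG0 : (Nat.find hex)! * G 0 ≠ 0 := by
    rw [← iteratedDeriv_pow_mul_apply_zero (hG.of_le (mod_cast le_top)), ← funext hΦG]
    exact Nat.find_spec hex
  obtain ⟨k, hk⟩ : ∃ k, Nat.find hex = k + 1 :=
    Nat.exists_eq_succ_of_ne_zero fun h ↦ Nat.find_spec hex (by simp [h, h0])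
  exact ⟨k, G, hG, right_ne_zero_of_mul hG0, hk ▸ hΦG⟩

theorem exists_ckOnHalfLine_eq_div_deriv {Φ G : ℝ → ℝ} {k : ℕ} (hG : ContDiff ℝ ∞ G)
    (hG0 : G 0 ≠ 0) (hΦG : ∀ y, Φ y = y ^ (k + 1) * G y) (hderiv : ∀ y, 0 < y → deriv Φ y ≠ 0) :
    ∃ q : ℝ → ℝ, CkOnHalfLine ∞ q ∧ ∀ y, 0 < y → q y = Φ y / deriv Φ y := by
  set H : ℝ → ℝ := fun y ↦ (k + 1) * G y + y * deriv G y
  have hH : ContDiff ℝ ∞ H := by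
    have := (contDiff_infty_iff_deriv.1 hG).2
    fun_prop
  have hderivΦ : ∀ y, deriv Φ y = y ^ k * H y := fun y ↦ by
    rw [funext hΦG, ((hasDerivAt_pow (k + 1) y).fun_mul
      (hG.differentiable (by simp) y).hasDerivAt).deriv]
    simp only [H]
    push_cast
    ring
  have hH0 : H 0 ≠ 0 := by
    simpa [H] using mul_ne_zero (by positivity : (k : ℝ) + 1 ≠ 0) hG0
  obtain ⟨δ, hδ, hball⟩ :=
    Metric.eventually_nhds_iff.1 (hH.continuous.continuousAt.eventually_ne hH0)
  have hHne : ∀ y ∈ Ioi (-δ), H y ≠ 0 := by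
    intro y hy
    rcases lt_or_ge 0 y with hpos | hnonpos
    · exact fun h ↦ hderiv y hpos (by rw [hderivΦ, h, mul_zero])
    · exact hball (by rw [Real.dist_0_eq_abs]; exact abs_lt.2 ⟨mem_Ioi.1 hy, by linarith⟩)
  refine ⟨fun y ↦ y * G y / H y,
    ⟨δ, hδ, _, (contDiff_id.mul hG).contDiffOn.div hH.contDiffOn hHne, fun _ _ ↦ rfl⟩,
    fun y hy ↦ ?_⟩
  rw [hΦG, hderivΦ]
  field_simp [hHne y (mem_Ioi.2 (by linarith)), hy.ne']
  ring

/-- **Lemma (non-flat maps satisfy the condition).** Let `f : ℝ⁺ → ℝ⁺` be a homeomorphism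
which is smooth on `ℝ⁺` and restricts to a diffeomorphism of `(0,∞)`. If `f` is non-flat at
`0`, i.e. some derivative `f⁽ᵏ⁾(0)` is nonzero, then `f/f'`, defined on `(0,∞)`, extends to a
smooth function on `ℝ⁺ = [0,∞)`. -/
theorem nonflat_satisfies_condition (f : ℝ → ℝ) (hf : GoodHalfLineMap f)
    (hnonflat : ∃ m : ℕ, iteratedDerivWithin m f (Ici 0) 0 ≠ 0) :
    ∃ q : ℝ → ℝ, CkOnHalfLine ∞ q ∧ ∀ y : ℝ, 0 < y → q y = f y / deriv f y := by
  obtain ⟨F, hF, hfF⟩ := hf.smooth.exists_contDiff_eqOn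
  have hderiv : ∀ y, 0 < y → deriv f y = deriv F y := fun y hy ↦
    (eventuallyEq_of_mem (Ici_mem_nhds hy) hfF).deriv_eq
  obtain ⟨m, hm⟩ := hnonflat
  rw [iteratedDerivWithin_congr hfF self_mem_Ici,
    iteratedDerivWithin_eq_iteratedDeriv (uniqueDiffOn_Ici 0)
      (hF.of_le (mod_cast le_top)).contDiffAt self_mem_Ici] at hm
  obtain ⟨k, G, hG, hG0, hFG⟩ :=
    exists_contDiff_eq_pow_succ_mul hF (hfF self_mem_Ici ▸ hf.map_zero) hm
  obtain ⟨q, hq, hqF⟩ := exists_ckOnHalfLine_eq_div_deriv hG hG0 hFG fun y hy ↦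
    hderiv y hy ▸ hf.deriv_ne y hy
  exact ⟨q, hq, fun y hy ↦ by rw [hqF y hy, hfF (mem_Ici.2 hy.le), hderiv y hy]⟩

end
end

section
/- Let X be a real-analytic vector field defined on a neighborhood of the closed half-space ℝ̄ⁿ⁺ in ℝⁿ that is tangent to the boundary hyperplane {y = 0} (i.e. its ∂/∂y-component vanishes when y = 0). Then for every positive integer p, the pullback of X by the map φ_p : (x₁,…,x_{n−1},y) ↦ (x₁,…,x_{n−1},yᵖ) — whose value at (x,y) with y > 0 has i-th component Xᵢ(x,yᵖ) for i < n and n-th component (1/p)·y^{1−p}·Xₙ(x,yᵖ) — extends to a real-analytic vector field on the closed half-space ℝ̄ⁿ⁺. -/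
open Matrix Metric Set Function
open scoped ContDiff

noncomputable section

/-- The Lorentz form matrix `J = diag(1,…,1,−1)` on `ℝ^{n+1}`. -/
def lorentzJ (n : ℕ) : Matrix (Fin (n+1)) (Fin (n+1)) ℝ :=
  Matrix.diagonal fun i => if i = Fin.last n then (-1 : ℝ) else 1

/-- The Lorentz group `O(n,1)`, i.e. the group of real `(n+1)×(n+1)` matrices `A` with
`Aᵀ J A = J`, as a subgroup of `GL(n+1, ℝ)`. -/
def lorentzGroup (n : ℕ) : Subgroup (GL (Fin (n+1)) ℝ) where
  carrier := {A | (A : Matrix (Fin (n+1)) (Fin (n+1)) ℝ)ᵀ * lorentzJ n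
      * (A : Matrix (Fin (n+1)) (Fin (n+1)) ℝ) = lorentzJ n}
  one_mem' := by simp
  mul_mem' := by
    intro a b ha hb
    simp only [Set.mem_setOf_eq, Units.val_mul, Matrix.transpose_mul] at *
    calc ((b : Matrix _ _ ℝ)ᵀ * (a : Matrix _ _ ℝ)ᵀ) * lorentzJ n
          * ((a : Matrix _ _ ℝ) * (b : Matrix _ _ ℝ))
        = (b : Matrix _ _ ℝ)ᵀ * (((a : Matrix _ _ ℝ)ᵀ * lorentzJ n
            * (a : Matrix _ _ ℝ)) * (b : Matrix _ _ ℝ)) := by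
          simp only [Matrix.mul_assoc]
      _ = lorentzJ n := by rw [ha, ← Matrix.mul_assoc, hb]
  inv_mem' := by
    intro a ha
    simp only [Set.mem_setOf_eq] at *
    have h2 : (a : Matrix (Fin (n+1)) (Fin (n+1)) ℝ)
        * ((a⁻¹ : GL (Fin (n+1)) ℝ) : Matrix (Fin (n+1)) (Fin (n+1)) ℝ) = 1 := a.mul_inv
    calc ((a⁻¹ : GL (Fin (n+1)) ℝ) : Matrix (Fin (n+1)) (Fin (n+1)) ℝ)ᵀ * lorentzJ n
          * ((a⁻¹ : GL (Fin (n+1)) ℝ) : Matrix (Fin (n+1)) (Fin (n+1)) ℝ)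
        = ((a⁻¹ : GL (Fin (n+1)) ℝ) : Matrix (Fin (n+1)) (Fin (n+1)) ℝ)ᵀ
          * ((a : Matrix (Fin (n+1)) (Fin (n+1)) ℝ)ᵀ * lorentzJ n
            * (a : Matrix (Fin (n+1)) (Fin (n+1)) ℝ))
          * ((a⁻¹ : GL (Fin (n+1)) ℝ) : Matrix (Fin (n+1)) (Fin (n+1)) ℝ) := by rw [ha]
      _ = ((a : Matrix (Fin (n+1)) (Fin (n+1)) ℝ)
            * ((a⁻¹ : GL (Fin (n+1)) ℝ) : Matrix (Fin (n+1)) (Fin (n+1)) ℝ))ᵀ * lorentzJ n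
          * ((a : Matrix (Fin (n+1)) (Fin (n+1)) ℝ)
            * ((a⁻¹ : GL (Fin (n+1)) ℝ) : Matrix (Fin (n+1)) (Fin (n+1)) ℝ)) := by
          simp only [Matrix.transpose_mul, Matrix.mul_assoc]
      _ = lorentzJ n := by rw [h2]; simp

/-- `G = SO₀(n,1)`: the identity component of the Lorentz group `O(n,1)`. -/
def SOo (n : ℕ) : Subgroup ↥(lorentzGroup n) :=
  Subgroup.connectedComponentOfOne ↥(lorentzGroup n)

/-- The matrix underlying an element of `SO₀(n,1)`. -/
def toMat {n : ℕ} (g : ↥(SOo n)) : Matrix (Fin (n+1)) (Fin (n+1)) ℝ :=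
  ((g : ↥(lorentzGroup n)) : GL (Fin (n+1)) ℝ)

/-- The projective action of `SO₀(n,1)` on (a subset of) `ℝⁿ`:
`proj_g(x) = u / t` where `(u, t) = g · (x, 1) ∈ ℝⁿ × ℝ`. -/
def projAct {n : ℕ} (g : ↥(SOo n)) (x : EuclideanSpace ℝ (Fin n)) :
    EuclideanSpace ℝ (Fin n) :=
  ((toMat g).mulVec (Fin.snoc (fun i => x i) 1) (Fin.last n))⁻¹
    • (WithLp.toLp 2 (Fin.init ((toMat g).mulVec (Fin.snoc (fun i => x i) 1))) : EuclideanSpace ℝ (Fin n))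

/-- The index of the last ("y") coordinate of `ℝⁿ`. -/
def lastIdx (n : ℕ) (hn : 0 < n) : Fin n := ⟨n - 1, by omega⟩

/-- The closed half-space `{y ≥ 0}` in `ℝⁿ`. -/
def closedHalfSpace (n : ℕ) (hn : 0 < n) : Set (EuclideanSpace ℝ (Fin n)) :=
  {x | 0 ≤ x (lastIdx n hn)}

/-- `φ_f : (x₁,…,x_{n−1},y) ↦ (x₁,…,x_{n−1},f(y))`. -/
def phiMap (n : ℕ) (hn : 0 < n) (f : ℝ → ℝ) (x : EuclideanSpace ℝ (Fin n)) :
    EuclideanSpace ℝ (Fin n) :=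
  WithLp.toLp 2 (Function.update (fun i => x i) (lastIdx n hn) (f (x (lastIdx n hn))))

/-- The half-space chart `KC`, mapping the closed unit ball minus one boundary point onto the
closed half-space; in Klein coordinates it is
`(x₁,…,x_{n−1},y) ↦ (x₁/(1−y), …, x_{n−1}/(1−y), (1−Σᵢxᵢ²−y²)/(1−y)²)`. -/
def chartKC (n : ℕ) (hn : 0 < n) (x : EuclideanSpace ℝ (Fin n)) :
    EuclideanSpace ℝ (Fin n) :=
  WithLp.toLp 2 (Function.update (fun i => x i / (1 - x (lastIdx n hn))) (lastIdx n hn)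
    ((1 - (∑ i ∈ Finset.univ.erase (lastIdx n hn), (x i) ^ 2)
        - (x (lastIdx n hn)) ^ 2) / (1 - x (lastIdx n hn)) ^ 2))

/-- A `Cᵏ` compactification of the isometric action of `SO₀(n,1)` on hyperbolic `n`-space:
a homeomorphism `φ` of the closed unit ball (with inverse `ψ`) which restricts to a `Cᵏ`
diffeomorphism of the open ball, and such that for every `g` the map `φ⁻¹ ∘ proj_g ∘ φ`,
defined on the open ball, extends to a `Cᵏ` map of the closed ball. -/
structure IsCompactification (n : ℕ) (k : WithTop ℕ∞)
    (φ ψ : EuclideanSpace ℝ (Fin n) → EuclideanSpace ℝ (Fin n)) : Prop where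
  continuousOn : ContinuousOn φ (closedBall 0 1)
  bijOn : BijOn φ (closedBall 0 1) (closedBall 0 1)
  invOn : InvOn ψ φ (closedBall 0 1) (closedBall 0 1)
  continuousOn_inv : ContinuousOn ψ (closedBall 0 1)
  bijOn_ball : BijOn φ (ball 0 1) (ball 0 1)
  contDiffOn : ContDiffOn ℝ k φ (ball 0 1)
  contDiffOn_inv : ContDiffOn ℝ k ψ (ball 0 1)
  extendsAction : ∀ g : ↥(SOo n),
    ∃ F : EuclideanSpace ℝ (Fin n) → EuclideanSpace ℝ (Fin n),
      ContDiffOn ℝ k F (closedBall 0 1) ∧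
      ∀ x ∈ ball (0 : EuclideanSpace ℝ (Fin n)) 1, F x = ψ (projAct g (φ x))

/-- `h` (with inverse `h'`) is a `Cᵏ` diffeomorphism of the closed unit ball. -/
structure IsCkDiffeoBall (n : ℕ) (k : WithTop ℕ∞)
    (h h' : EuclideanSpace ℝ (Fin n) → EuclideanSpace ℝ (Fin n)) : Prop where
  bijOn : BijOn h (closedBall 0 1) (closedBall 0 1)
  invOn : InvOn h' h (closedBall 0 1) (closedBall 0 1)
  contDiffOn : ContDiffOn ℝ k h (closedBall 0 1)
  contDiffOn_inv : ContDiffOn ℝ k h' (closedBall 0 1)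

/-- Two compactifications `(φ₁, ψ₁)` and `(φ₂, ψ₂)` are `Cᵏ`-conjugate: a `Cᵏ` diffeomorphism
of the closed ball intertwines the corresponding (extended) actions of `SO₀(n,1)`. -/
def CkConjugate (n : ℕ) (k : WithTop ℕ∞)
    (φ₁ ψ₁ φ₂ ψ₂ : EuclideanSpace ℝ (Fin n) → EuclideanSpace ℝ (Fin n)) : Prop :=
  ∃ h h', IsCkDiffeoBall n k h h' ∧
    ∀ (g : ↥(SOo n)), ∀ x ∈ ball (0 : EuclideanSpace ℝ (Fin n)) 1,
      h (ψ₁ (projAct g (φ₁ x))) = ψ₂ (projAct g (φ₂ (h x)))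

/-- The compactification `(φ, ψ)` is, read through the chart `KC`, given by
`φ_f : (x, y) ↦ (x, f(y))`. -/
def DefinedByPhi (n : ℕ) (hn : 0 < n) (f : ℝ → ℝ)
    (φ ψ : EuclideanSpace ℝ (Fin n) → EuclideanSpace ℝ (Fin n)) : Prop :=
  ∀ x ∈ ball (0 : EuclideanSpace ℝ (Fin n)) 1,
    chartKC n hn (φ x) = phiMap n hn f (chartKC n hn x)

/-- `ρ` is a `Cᵏ` action of `SO₀(n,1)` on the closed half-space which, read through
`φ_f ∘ KC` on the open ball, is the projective action; that is, `ρ g` is the continuous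
extension of the conjugate `φ_f⁻¹ ∘ (KC ∘ proj_g ∘ KC⁻¹) ∘ φ_f` of the projective action
written in the chart `KC`. -/
structure IsHalfSpaceActionFor (n : ℕ) (hn : 0 < n) (k : WithTop ℕ∞) (f : ℝ → ℝ)
    (ρ : ↥(SOo n) → EuclideanSpace ℝ (Fin n) → EuclideanSpace ℝ (Fin n)) : Prop where
  mapsTo : ∀ g, MapsTo (ρ g) (closedHalfSpace n hn) (closedHalfSpace n hn)
  contDiffOn : ∀ g, ∀ x ∈ closedHalfSpace n hn,
    ContDiffWithinAt ℝ k (ρ g) (closedHalfSpace n hn) x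
  map_one : ∀ x ∈ closedHalfSpace n hn, ρ 1 x = x
  map_mul : ∀ g h, ∀ x ∈ closedHalfSpace n hn, ρ (g * h) x = ρ g (ρ h x)
  intertwine : ∀ g, ∀ x ∈ ball (0 : EuclideanSpace ℝ (Fin n)) 1,
    ∀ z ∈ closedHalfSpace n hn, phiMap n hn f z = chartKC n hn x →
      phiMap n hn f (ρ g z) = chartKC n hn (projAct g x)

/-- A continuous action `ρ` of `SO₀(n,1)` on the closed unit ball preserving the open ball. -/
structure IsContinuousBallAction (n : ℕ)
    (ρ : ↥(SOo n) → EuclideanSpace ℝ (Fin n) → EuclideanSpace ℝ (Fin n)) : Prop where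
  continuousOn : ContinuousOn
    (fun q : ↥(SOo n) × EuclideanSpace ℝ (Fin n) => ρ q.1 q.2)
    (univ ×ˢ closedBall 0 1)
  mapsTo : ∀ g, MapsTo (ρ g) (closedBall 0 1) (closedBall 0 1)
  mapsTo_ball : ∀ g, MapsTo (ρ g) (ball 0 1) (ball 0 1)
  map_one : ∀ x ∈ closedBall (0 : EuclideanSpace ℝ (Fin n)) 1, ρ 1 x = x
  map_mul : ∀ g h, ∀ x ∈ closedBall (0 : EuclideanSpace ℝ (Fin n)) 1,
    ρ (g * h) x = ρ g (ρ h x)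

/-- `S` is a `Cᵏ` one-dimensional submanifold with boundary of the closed unit ball which is
transversal to the boundary sphere: near each point it is a `Cᵏ`-embedded arc, parametrized
over `[0,ε)` at its boundary points (which lie on the sphere, where the arc is transversal
to the sphere, i.e. its velocity has a nonzero radial component) and over `(−ε,ε)` at its
interior points. -/
def CkBorderTransversalCurve (n : ℕ) (k : WithTop ℕ∞)
    (S : Set (EuclideanSpace ℝ (Fin n))) : Prop :=
  S ⊆ closedBall 0 1 ∧
  ∀ x ∈ S, ∃ (γ : ℝ → EuclideanSpace ℝ (Fin n)) (ε : ℝ)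
      (U : Set (EuclideanSpace ℝ (Fin n))),
    0 < ε ∧ U ∈ nhds x ∧ γ 0 = x ∧
    ContDiffOn ℝ k γ (Ioo (-ε) ε) ∧
    InjOn γ (Ioo (-ε) ε) ∧
    deriv γ 0 ≠ 0 ∧
    (x ∈ sphere (0 : EuclideanSpace ℝ (Fin n)) 1 →
      S ∩ U = γ '' (Ico 0 ε) ∧ (inner ℝ (deriv γ 0) x : ℝ) ≠ 0) ∧
    (x ∉ sphere (0 : EuclideanSpace ℝ (Fin n)) 1 → S ∩ U = γ '' (Ioo (-ε) ε))


open scoped NNReal ENNReal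

section DivisionLemma

variable {E : Type*} [NormedAddCommGroup E] [NormedSpace ℝ E]

/-- If an analytic function `f` vanishes on the hyperplane `{ℓ = 0}`, then near any point `a`
of this hyperplane one can write `f x = ℓ x * q x` with `q` analytic at `a`. -/
lemma analyticAt_div_linear (f : E → ℝ) (ℓ : E →L[ℝ] ℝ) (e : E) (he : ℓ e = 1)
    (a : E) (ha : ℓ a = 0) (hf : AnalyticAt ℝ f a) (h0 : ∀ x, ℓ x = 0 → f x = 0) :
    ∃ q : E → ℝ, AnalyticAt ℝ q a ∧ ∀ᶠ x in nhds a, f x = ℓ x * q x := by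
  obtain ⟨P, r, hP⟩ := hf
  set A : E →L[ℝ] E := ContinuousLinearMap.id ℝ E - ℓ.smulRight e with hAdef
  have hAapp : ∀ v, A v = v - ℓ v • e := fun v => rfl
  have hℓA : ∀ v, ℓ (A v) = 0 := by
    intro v
    rw [hAapp, map_sub, _root_.map_smul, smul_eq_mul, he, mul_one, sub_self]
  -- the building blocks of the quotient power series
  set T : ∀ m : ℕ, Fin (m + 1) → ContinuousMultilinearMap ℝ (fun _ : Fin m => E) ℝ :=
    fun m i => (((P (m + 1)).domDomCongr (Equiv.swap 0 i)).curryLeft e).compContinuousLinearMap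
      (fun j : Fin m => if (j : ℕ) < (i : ℕ) then ContinuousLinearMap.id ℝ E else A) with hTdef
  -- evaluation of `T m i` on the diagonal
  have hT : ∀ (m : ℕ) (i : Fin (m + 1)) (v : E),
      T m i (fun _ => v)
        = P (m + 1) (fun j => if j = i then e else if (j : ℕ) < (i : ℕ) then v else A v) := by
    intro m i v
    have hcons : ∀ j : Fin (m + 1),
        (Fin.cons e (fun j : Fin m => if (j : ℕ) < (i : ℕ) then v else A v) :
          ∀ _ : Fin (m + 1), E) ((Equiv.swap 0 i) j)
          = if j = i then e else if (j : ℕ) < (i : ℕ) then v else A v := by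
      intro j
      by_cases hji : j = i
      · subst hji
        rw [Equiv.swap_apply_right, if_pos rfl, Fin.cons_zero]
      · rw [if_neg hji]
        by_cases hj0 : j = 0
        · subst hj0
          have hi0 : i ≠ 0 := fun h => hji h.symm
          rw [Equiv.swap_apply_left]
          obtain ⟨k, rfl⟩ := (Fin.eq_zero_or_eq_succ i).resolve_left hi0
          rw [Fin.cons_succ]
          have h1 : (k : ℕ) < (k.succ : ℕ) := by simp
          have h2 : (0 : ℕ) < ((k.succ : Fin (m+1)) : ℕ) := by simp
          simp [h1, h2]
        · rw [Equiv.swap_apply_of_ne_of_ne hj0 hji]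
          obtain ⟨k, rfl⟩ := (Fin.eq_zero_or_eq_succ j).resolve_left hj0
          rw [Fin.cons_succ]
          have hne : ((k : ℕ) + 1) ≠ (i : ℕ) := by
            intro h
            exact hji (Fin.ext (by simpa using h))
          have : ((k : ℕ) < (i : ℕ)) ↔ ((k.succ : Fin (m+1)) : ℕ) < (i : ℕ) := by
            simp only [Fin.val_succ]
            omega
          by_cases hk : (k : ℕ) < (i : ℕ)
          · rw [if_pos hk, if_pos (this.1 hk)]
          · rw [if_neg hk, if_neg (fun h => hk (this.2 h))]
    calc T m i (fun _ => v)
        = ((P (m + 1)).domDomCongr (Equiv.swap 0 i))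
            (Fin.cons e (fun j : Fin m => if (j : ℕ) < (i : ℕ) then v else A v)) := by
          rw [hTdef]
          rw [ContinuousMultilinearMap.compContinuousLinearMap_apply,
            ContinuousMultilinearMap.curryLeft_apply]
          refine congrArg _ (congrArg _ (funext fun j => ?_))
          by_cases hj : (j : ℕ) < (i : ℕ) <;> simp [hj]
      _ = P (m + 1) (fun j => if j = i then e else if (j : ℕ) < (i : ℕ) then v else A v) := by
          rw [ContinuousMultilinearMap.domDomCongr_apply]
          exact congrArg _ (funext hcons)
  -- the quotient series
  set Q : FormalMultilinearSeries ℝ E ℝ := fun m => ∑ i : Fin (m + 1), T m i with hQdef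
  -- telescoping identity
  have key : ∀ (m : ℕ) (v : E),
      ℓ v * (Q m (fun _ => v))
        = P (m + 1) (fun _ => v) - P (m + 1) (fun _ => A v) := by
    intro m v
    set u := A v with hu
    set g : ℕ → ℝ := fun c => P (m + 1) (fun j : Fin (m + 1) => if (j : ℕ) < c then v else u)
      with hg
    have step : ∀ i : Fin (m + 1), ℓ v * T m i (fun _ => v) = g ((i : ℕ) + 1) - g (i : ℕ) := by
      intro i
      set base : Fin (m + 1) → E := fun j => if (j : ℕ) < (i : ℕ) then v else u with hbase
      have h1 : (fun j : Fin (m + 1) => if (j : ℕ) < ((i : ℕ) + 1) then v else u)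
          = Function.update base i v := by
        funext j
        by_cases hj : j = i
        · rw [hj, Function.update_self]
          exact if_pos (Nat.lt_succ_self _)
        · rw [Function.update_of_ne hj]
          have hne : (j : ℕ) ≠ (i : ℕ) := fun h => hj (Fin.ext h)
          show (if (j : ℕ) < (i : ℕ) + 1 then v else u) = (if (j : ℕ) < (i : ℕ) then v else u)
          exact if_congr (by omega) rfl rfl
      have h2 : base = Function.update base i u := by
        funext j
        by_cases hj : j = i
        · rw [hj, Function.update_self]
          show (if ((i : ℕ)) < (i : ℕ) then v else u) = u
          exact if_neg (lt_irrefl _)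
        · rw [Function.update_of_ne hj]
      have hvu : v - u = ℓ v • e := by rw [hu, hAapp, sub_sub_cancel]
      have h4 : Function.update base i e
          = fun j => if j = i then e else if (j : ℕ) < (i : ℕ) then v else u := by
        funext j
        rw [Function.update_apply]
      calc ℓ v * T m i (fun _ => v)
          = ℓ v * P (m + 1) (Function.update base i e) := by rw [hT m i v, h4]
        _ = P (m + 1) (Function.update base i (ℓ v • e)) := by
            rw [ContinuousMultilinearMap.map_update_smul, smul_eq_mul]
        _ = P (m + 1) (Function.update base i (v - u)) := by rw [hvu]
        _ = P (m + 1) (Function.update base i v) - P (m + 1) (Function.update base i u) :=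
            ContinuousMultilinearMap.map_update_sub _ _ _ _ _
        _ = g ((i : ℕ) + 1) - g (i : ℕ) := by
            simp only [hg]
            rw [← h1, ← h2]
    calc ℓ v * Q m (fun _ => v)
        = ∑ i : Fin (m + 1), ℓ v * T m i (fun _ => v) := by
          rw [hQdef, ContinuousMultilinearMap.sum_apply, Finset.mul_sum]
      _ = ∑ i : Fin (m + 1), (g ((i : ℕ) + 1) - g (i : ℕ)) := Finset.sum_congr rfl
          (fun i _ => step i)
      _ = ∑ c ∈ Finset.range (m + 1), (g (c + 1) - g c) :=
          Fin.sum_univ_eq_sum_range (fun c => g (c + 1) - g c) (m + 1)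
      _ = g (m + 1) - g 0 := Finset.sum_range_sub g (m + 1)
      _ = P (m + 1) (fun _ => v) - P (m + 1) (fun _ => A v) := by
          have e1 : g (m + 1) = P (m + 1) (fun _ => v) :=
            congrArg _ (funext fun j => if_pos j.isLt)
          have e2 : g 0 = P (m + 1) (fun _ => A v) :=
            congrArg _ (funext fun j => if_neg (by omega))
          rw [e1, e2]
  -- norm estimates
  set M : ℝ := max 1 ‖A‖ with hMdef
  have hM1 : (1 : ℝ) ≤ M := le_max_left _ _
  have hM0 : (0 : ℝ) < M := lt_of_lt_of_le one_pos hM1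
  have hTnorm : ∀ (m : ℕ) (i : Fin (m + 1)), ‖T m i‖ ≤ ‖P (m + 1)‖ * ‖e‖ * M ^ m := by
    intro m i
    calc ‖T m i‖
        ≤ ‖((P (m + 1)).domDomCongr (Equiv.swap 0 i)).curryLeft e‖
          * ∏ j : Fin m, ‖if (j : ℕ) < (i : ℕ) then ContinuousLinearMap.id ℝ E else A‖ :=
        ContinuousMultilinearMap.norm_compContinuousLinearMap_le _ _
      _ ≤ (‖P (m + 1)‖ * ‖e‖) * M ^ m := by
        have hc : ‖((P (m + 1)).domDomCongr (Equiv.swap 0 i)).curryLeft e‖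
            ≤ ‖P (m + 1)‖ * ‖e‖ := by
          calc ‖((P (m + 1)).domDomCongr (Equiv.swap 0 i)).curryLeft e‖
              ≤ ‖((P (m + 1)).domDomCongr (Equiv.swap 0 i)).curryLeft‖ * ‖e‖ :=
              ContinuousLinearMap.le_opNorm _ _
            _ = ‖(P (m + 1)).domDomCongr (Equiv.swap 0 i)‖ * ‖e‖ := by
              rw [ContinuousMultilinearMap.curryLeft_norm]
            _ = ‖P (m + 1)‖ * ‖e‖ := by
              rw [ContinuousMultilinearMap.norm_domDomCongr]
        have hprod : (∏ j : Fin m,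
            ‖if (j : ℕ) < (i : ℕ) then ContinuousLinearMap.id ℝ E else A‖) ≤ M ^ m := by
          calc (∏ j : Fin m, ‖if (j : ℕ) < (i : ℕ) then ContinuousLinearMap.id ℝ E else A‖)
              ≤ ∏ _j : Fin m, M := by
                apply Finset.prod_le_prod (fun j _ => norm_nonneg _)
                intro j _
                by_cases hj : (j : ℕ) < (i : ℕ)
                · rw [if_pos hj]
                  exact le_trans (ContinuousLinearMap.norm_id_le) hM1
                · rw [if_neg hj]
                  exact le_max_right _ _
            _ = M ^ m := by rw [Finset.prod_const, Finset.card_univ, Fintype.card_fin]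
        exact mul_le_mul hc hprod (Finset.prod_nonneg fun j _ => norm_nonneg _)
          (mul_nonneg (norm_nonneg _) (norm_nonneg _))
  -- radius of Q is positive
  obtain ⟨ρ, hρ0, hρlt⟩ := ENNReal.lt_iff_exists_nnreal_btwn.1 hP.radius_pos
  have hρ0' : 0 < ρ := by exact_mod_cast hρ0
  have hρ0'' : (0 : ℝ) < ρ := hρ0'
  obtain ⟨C, hC0, hPC⟩ := P.norm_mul_pow_le_of_lt_radius hρlt
  have hden0 : (2 * (1 + ‖A‖₊) : ℝ≥0) ≠ 0 :=
    ne_of_gt (mul_pos two_pos (add_pos_of_pos_of_nonneg one_pos zero_le))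
  set τ : ℝ≥0 := ρ / (2 * (1 + ‖A‖₊)) with hτdef
  have hτ0 : 0 < τ := by
    rw [hτdef]
    exact div_pos hρ0' (pos_iff_ne_zero.2 hden0)
  have hτle : (τ : ℝ) ≤ (ρ : ℝ) / (2 * M) := by
    have hM : M ≤ 1 + ‖A‖ := max_le (by linarith [norm_nonneg A]) (by linarith)
    rw [hτdef, NNReal.coe_div]
    push_cast
    rw [div_le_div_iff_of_pos_left hρ0'' (by positivity) (by positivity)]
    linarith
  have hQbound : ∀ m : ℕ, ‖Q m‖ * (τ : ℝ) ^ m ≤ 2 * C * ‖e‖ / ρ := by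
    intro m
    have hQn : ‖Q m‖ ≤ (m + 1 : ℝ) * (‖P (m + 1)‖ * ‖e‖ * M ^ m) := by
      calc ‖Q m‖ ≤ ∑ i : Fin (m + 1), ‖T m i‖ := norm_sum_le _ _
        _ ≤ ∑ _i : Fin (m + 1), (‖P (m + 1)‖ * ‖e‖ * M ^ m) :=
          Finset.sum_le_sum (fun i _ => hTnorm m i)
        _ = (m + 1 : ℝ) * (‖P (m + 1)‖ * ‖e‖ * M ^ m) := by
          rw [Finset.sum_const, Finset.card_univ, Fintype.card_fin, nsmul_eq_mul]
          push_cast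
          ring
    have h2m : ((m : ℝ) + 1) ≤ 2 ^ m * 2 := by
      have := Nat.lt_two_pow_self (n := m + 1)
      have h' : (m : ℝ) + 1 ≤ (2 : ℝ) ^ (m + 1) := by exact_mod_cast this.le
      calc ((m : ℝ) + 1) ≤ (2 : ℝ) ^ (m + 1) := h'
        _ = 2 ^ m * 2 := by ring
    have hτnn : (0 : ℝ) ≤ (τ : ℝ) := τ.coe_nonneg
    have hPn : (0 : ℝ) ≤ ‖P (m + 1)‖ := norm_nonneg _
    have hQnn : (0 : ℝ) ≤ ‖Q m‖ := norm_nonneg _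
    have hMpow : (0 : ℝ) < M ^ m := pow_pos hM0 m
    calc ‖Q m‖ * (τ : ℝ) ^ m
        ≤ ((m + 1 : ℝ) * (‖P (m + 1)‖ * ‖e‖ * M ^ m)) * ((ρ : ℝ) / (2 * M)) ^ m := by
          apply mul_le_mul hQn (pow_le_pow_left₀ hτnn hτle m) (pow_nonneg hτnn m)
          have : (0 : ℝ) ≤ ‖P (m + 1)‖ * ‖e‖ * M ^ m :=
            mul_nonneg (mul_nonneg hPn (norm_nonneg _)) hMpow.le
          positivity
      _ = ((m + 1 : ℝ) / 2 ^ m) * (‖P (m + 1)‖ * (ρ : ℝ) ^ (m + 1)) * ‖e‖ / ρ := by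
          rw [div_pow, mul_pow]
          field_simp
          ring
      _ ≤ (2 : ℝ) * C * ‖e‖ / ρ := by
          have hA1 : ((m : ℝ) + 1) / 2 ^ m ≤ 2 := by
            rw [div_le_iff₀ (by positivity)]
            linarith [h2m]
          have hA2 : ‖P (m + 1)‖ * (ρ : ℝ) ^ (m + 1) ≤ C := hPC (m + 1)
          rw [div_le_div_iff_of_pos_right hρ0'']
          calc ((m : ℝ) + 1) / 2 ^ m * (‖P (m + 1)‖ * (ρ : ℝ) ^ (m + 1)) * ‖e‖
              ≤ 2 * C * ‖e‖ := by
                apply mul_le_mul ?_ le_rfl (norm_nonneg e)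
                  (by positivity)
                apply mul_le_mul hA1 hA2 (by positivity) (by norm_num)
            _ = 2 * C * ‖e‖ := rfl
  have hQrad : (τ : ENNReal) ≤ Q.radius := Q.le_radius_of_bound _ hQbound
  have hQpos : (0 : ENNReal) < Q.radius :=
    lt_of_lt_of_le (by exact_mod_cast hτ0) hQrad
  set q : E → ℝ := fun x => Q.sum (x - a) with hqdef
  have hqball : HasFPowerSeriesOnBall q Q a Q.radius := by
    have := (Q.hasFPowerSeriesOnBall hQpos).comp_sub a
    rwa [zero_add] at this
  refine ⟨q, hqball.analyticAt, ?_⟩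
  obtain ⟨ε, hε0, hεlt⟩ := ENNReal.lt_iff_exists_nnreal_btwn.1 (lt_min hP.r_pos hQpos)
  have hε0' : 0 < ε := by exact_mod_cast hε0
  have hεr : (ε : ENNReal) < r := hεlt.trans_le (min_le_left _ _)
  have hεQ : (ε : ENNReal) < Q.radius := hεlt.trans_le (min_le_right _ _)
  set δ : NNReal := ε / (1 + ‖A‖₊) with hδdef
  have hd0 : (1 + ‖A‖₊ : NNReal) ≠ 0 := ne_of_gt (add_pos_of_pos_of_nonneg one_pos zero_le)
  have hδ0 : 0 < δ := div_pos hε0' (pos_iff_ne_zero.2 hd0)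
  have hδ0' : (0 : ℝ) < (δ : ℝ) := hδ0
  filter_upwards [Metric.ball_mem_nhds a hδ0'] with x hx
  set v : E := x - a with hvdef
  have hvn : ‖v‖₊ < δ := by
    have h1 : ‖v‖ < (δ : ℝ) := by rwa [hvdef, ← dist_eq_norm]
    exact_mod_cast h1
  have hvε : ‖v‖₊ < ε := by
    refine lt_of_lt_of_le hvn ?_
    rw [hδdef, div_le_iff₀ (pos_iff_ne_zero.2 hd0)]
    exact le_mul_of_one_le_right zero_le (le_add_of_nonneg_right zero_le)
  have hAvε : ‖A v‖₊ < ε := by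
    calc ‖A v‖₊ ≤ ‖A‖₊ * ‖v‖₊ := A.le_opNNNorm v
      _ ≤ (1 + ‖A‖₊) * ‖v‖₊ := mul_le_mul_of_nonneg_right
          (le_add_of_nonneg_left zero_le) zero_le
      _ < (1 + ‖A‖₊) * δ := by
          exact mul_lt_mul_of_pos_left hvn (pos_iff_ne_zero.2 hd0)
      _ = ε := by rw [hδdef, mul_comm, div_mul_cancel₀ _ hd0]
  have hx_ball_r : x ∈ Metric.eball a r := by
    rw [Metric.mem_eball, edist_eq_enorm_sub]
    exact lt_trans (by exact_mod_cast hvε) hεr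
  have hx_ball_Q : x ∈ Metric.eball a Q.radius := by
    rw [Metric.mem_eball, edist_eq_enorm_sub]
    exact lt_trans (by exact_mod_cast hvε) hεQ
  have hAv_ball : A v ∈ Metric.eball (0 : E) r := by
    rw [mem_eball_zero_iff]
    exact lt_trans (by exact_mod_cast hAvε) hεr
  have hsv : HasSum (fun k => P k (fun _ => v)) (f x) := hP.hasSum_sub hx_ball_r
  have hsq : HasSum (fun k => Q k (fun _ => v)) (q x) := hqball.hasSum_sub hx_ball_Q
  have hsu : HasSum (fun k => P k (fun _ => A v)) 0 := by
    have h := hP.hasSum (y := A v) hAv_ball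
    rwa [show f (a + A v) = 0 from h0 _ (by rw [map_add, hℓA, ha, add_zero])] at h
  have hc0 : P 0 (fun _ => v) = P 0 (fun _ => A v) :=
    congrArg _ (funext fun j => j.elim0)
  have h1 : HasSum (fun m => P (m + 1) (fun _ => v))
      (f x - P 0 (fun _ => v)) := by
    have := (hasSum_nat_add_iff' (f := fun k => P k (fun _ => v)) 1).2 hsv
    simpa using this
  have h2 : HasSum (fun m => P (m + 1) (fun _ => A v))
      (0 - P 0 (fun _ => A v)) := by
    have := (hasSum_nat_add_iff' (f := fun k => P k (fun _ => A v)) 1).2 hsu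
    simpa using this
  have h3 : HasSum (fun m => P (m + 1) (fun _ => v) - P (m + 1) (fun _ => A v)) (f x) := by
    have h := h1.sub h2
    have hval : (f x - P 0 (fun _ => v)) - (0 - P 0 (fun _ => A v)) = f x := by
      rw [hc0]; ring
    rwa [hval] at h
  have hℓv : ℓ v = ℓ x := by rw [hvdef, map_sub, ha, sub_zero]
  have h4 : HasSum (fun m => ℓ x * Q m (fun _ => v)) (ℓ x * q x) := hsq.mul_left _
  have h5 : (fun m => ℓ x * Q m (fun _ => v))
      = fun m => P (m + 1) (fun _ => v) - P (m + 1) (fun _ => A v) :=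
    funext fun m => by rw [← hℓv, key m v]
  rw [h5] at h4
  exact (h4.unique h3).symm

end DivisionLemma

-- coordinates of a sum of single vectors
private lemma sum_single_coord {n : ℕ} (c : Fin n → ℝ) (j : Fin n) :
    (∑ i : Fin n, c i • EuclideanSpace.single i (1 : ℝ)) j = c j := by
  calc (∑ i : Fin n, c i • EuclideanSpace.single i (1 : ℝ)) j
      = EuclideanSpace.proj j (∑ i : Fin n, c i • EuclideanSpace.single i (1 : ℝ)) := rfl
    _ = ∑ i : Fin n, EuclideanSpace.proj j (c i • EuclideanSpace.single i (1 : ℝ)) :=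
      map_sum _ _ _
    _ = ∑ i : Fin n, c i * (if j = i then 1 else 0) := by
      refine Finset.sum_congr rfl fun i _ => ?_
      rw [_root_.map_smul, smul_eq_mul]
      congr 1
      exact EuclideanSpace.single_apply i 1 j
    _ = c j := by simp

private lemma analyticAt_of_coords {n : ℕ} {F : Type*} [NormedAddCommGroup F]
    [NormedSpace ℝ F] {g : F → EuclideanSpace ℝ (Fin n)} {x : F}
    (h : ∀ i, AnalyticAt ℝ (fun z => g z i) x) : AnalyticAt ℝ g x := by
  have hrepr : g = fun z => ∑ i : Fin n, (g z i) • EuclideanSpace.single i (1 : ℝ) := by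
    funext z
    apply PiLp.ext
    intro j
    rw [sum_single_coord (fun i => g z i) j]
  rw [hrepr]
  exact Finset.analyticAt_fun_sum _ fun i _ => (h i).smul analyticAt_const

private lemma coordAnalytic {n : ℕ} (i : Fin n) (x : EuclideanSpace ℝ (Fin n)) :
    AnalyticAt ℝ (fun z : EuclideanSpace ℝ (Fin n) => z i) x := by
  have h : (fun z : EuclideanSpace ℝ (Fin n) => z i)
      = (EuclideanSpace.proj (𝕜 := ℝ) i : EuclideanSpace ℝ (Fin n) →L[ℝ] ℝ) := rfl
  rw [h]
  exact ContinuousLinearMap.analyticAt _ x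


/-- **Lemma (analytic extension of the pullback of a tangent vector field).** Let `X` be a
real-analytic vector field on a neighborhood of the closed half-space which is tangent to the
boundary hyperplane `{y = 0}`. Then for every positive integer `p`, the pullback of `X` by
`φ_p : (x,y) ↦ (x,yᵖ)` — with `i`-th component `Xᵢ(x,yᵖ)` for `i < n` and last component
`(1/p)·y^{1−p}·Xₙ(x,yᵖ)` — extends to a real-analytic vector field on the closed
half-space. -/
theorem pullback_analytic_extension (n : ℕ) (hn : 0 < n)
    (X : EuclideanSpace ℝ (Fin n) → EuclideanSpace ℝ (Fin n))
    (hX : ∀ x ∈ closedHalfSpace n hn, AnalyticAt ℝ X x)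
    (htan : ∀ x ∈ closedHalfSpace n hn, x (lastIdx n hn) = 0 → X x (lastIdx n hn) = 0)
    (p : ℕ) (hp : 0 < p) :
    ∃ Y : EuclideanSpace ℝ (Fin n) → EuclideanSpace ℝ (Fin n),
      (∀ x ∈ closedHalfSpace n hn, AnalyticAt ℝ Y x) ∧
      ∀ x : EuclideanSpace ℝ (Fin n), 0 < x (lastIdx n hn) →
        (∀ i : Fin n, i ≠ lastIdx n hn →
          Y x i = X (phiMap n hn (fun y => y ^ p) x) i) ∧
        Y x (lastIdx n hn) = (p : ℝ)⁻¹ * (x (lastIdx n hn)) ^ ((1 : ℤ) - (p : ℤ))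
          * X (phiMap n hn (fun y => y ^ p) x) (lastIdx n hn) := by
  classical
  set l : Fin n := lastIdx n hn with hl
  set φ : EuclideanSpace ℝ (Fin n) → EuclideanSpace ℝ (Fin n) := phiMap n hn (fun y => y ^ p) with hφdef
  have hφcoord : ∀ (x : EuclideanSpace ℝ (Fin n)) (i : Fin n), φ x i = if i = l then (x l) ^ p else x i := by
    intro x i
    exact Function.update_apply (fun i => x i) l ((x l) ^ p) i
  have hφlast : ∀ x : EuclideanSpace ℝ (Fin n), φ x l = (x l) ^ p := by
    intro x; rw [hφcoord]; exact if_pos rfl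
  have hφmem : ∀ x ∈ closedHalfSpace n hn, φ x ∈ closedHalfSpace n hn := by
    intro x hx
    show (0 : ℝ) ≤ φ x l
    rw [hφlast]
    exact pow_nonneg hx p
  have hφana : ∀ x : EuclideanSpace ℝ (Fin n), AnalyticAt ℝ φ x := by
    intro x
    apply analyticAt_of_coords
    intro i
    have : (fun z : EuclideanSpace ℝ (Fin n) => φ z i) = fun z : EuclideanSpace ℝ (Fin n) => if i = l then (z l) ^ p else z i := by
      funext z; rw [hφcoord]
    rw [this]
    by_cases hi : i = l
    · simp only [if_pos hi]
      exact (coordAnalytic l x).pow p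
    · simp only [if_neg hi]
      exact coordAnalytic i x
  have hφfix : ∀ z : EuclideanSpace ℝ (Fin n), z l = 0 → φ z = z := by
    intro z hz
    apply PiLp.ext
    intro j
    rw [hφcoord]
    by_cases hj : j = l
    · rw [if_pos hj, hj, hz, zero_pow hp.ne']
    · rw [if_neg hj]
  -- the analytically extended quotient
  set L : EuclideanSpace ℝ (Fin n) → ℝ := fun x =>
    deriv (fun t : ℝ => X (WithLp.toLp 2 (Function.update (fun i => x i) l t)) l) 0 with hLdef
  set G : EuclideanSpace ℝ (Fin n) → ℝ := fun x =>
    if x l = 0 then L x else ((x l) ^ p)⁻¹ * X (φ x) l with hGdef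
  have hGpos : ∀ x : EuclideanSpace ℝ (Fin n), x l ≠ 0 → G x = ((x l) ^ p)⁻¹ * X (φ x) l := by
    intro x hx; rw [hGdef]; exact if_neg hx
  -- G is analytic at interior points
  have hGint : ∀ x ∈ closedHalfSpace n hn, 0 < x l → AnalyticAt ℝ G x := by
    intro x hx hxl
    have hopen : {z : EuclideanSpace ℝ (Fin n) | 0 < z l} ∈ nhds x :=
      (isOpen_lt continuous_const ((EuclideanSpace.proj l).continuous)).mem_nhds hxl
    have hev : (fun z : EuclideanSpace ℝ (Fin n) => ((z l) ^ p)⁻¹ * X (φ z) l) =ᶠ[nhds x] G := by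
      filter_upwards [hopen] with z hz
      rw [hGpos z (ne_of_gt hz)]
    refine AnalyticAt.congr ?_ hev
    have h1 : AnalyticAt ℝ (fun z : EuclideanSpace ℝ (Fin n) => ((z l) ^ p)⁻¹) x :=
      ((coordAnalytic l x).pow p).inv (pow_ne_zero p (ne_of_gt hxl))
    have h2 : AnalyticAt ℝ (fun z : EuclideanSpace ℝ (Fin n) => X (φ z) l) x :=
      (coordAnalytic l _).comp ((hX (φ x) (hφmem x hx)).comp (hφana x))
    exact h1.mul h2
  -- G is analytic at boundary points
  have hGbd : ∀ x ∈ closedHalfSpace n hn, x l = 0 → AnalyticAt ℝ G x := by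
    intro x hx hx0
    obtain ⟨q, hq, heq⟩ := analyticAt_div_linear (fun z : EuclideanSpace ℝ (Fin n) => X z l)
      (EuclideanSpace.proj l) (EuclideanSpace.single l 1)
      (by simp [EuclideanSpace.single_apply]) x hx0
      ((coordAnalytic l _).comp (hX x hx))
      (fun z hz => htan z (le_of_eq hz.symm) hz)
    have hEv : ∀ᶠ z in nhds x, (X z l = z l * q z ∧ AnalyticAt ℝ q z) :=
      heq.and hq.eventually_analyticAt
    obtain ⟨ε, hε, hball⟩ := Metric.eventually_nhds_iff_ball.1 hEv
    have hφx : φ x = x := hφfix x hx0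
    -- on hyperplane points, the derivative formula recovers q
    have hLq : ∀ z : EuclideanSpace ℝ (Fin n), z l = 0 → z ∈ Metric.ball x ε → L z = q z := by
      intro z hz hzball
      set c : ℝ → EuclideanSpace ℝ (Fin n) := fun t => z + t • EuclideanSpace.single l (1 : ℝ) with hcdef
      have hc0 : c 0 = z := by rw [hcdef]; simp
      have hcl : ∀ t, (c t) l = t := by
        intro t
        rw [hcdef]
        show z l + t • (EuclideanSpace.single l (1 : ℝ)) l = t
        rw [hz, EuclideanSpace.single_apply, if_pos rfl, smul_eq_mul, mul_one, zero_add]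
      have hLc : (fun t : ℝ => X (WithLp.toLp 2 (Function.update (fun i => z i) l t)) l)
          = fun t : ℝ => X (c t) l := by
        funext t
        refine congrArg (fun w => X w l) ?_
        apply PiLp.ext
        intro j
        show Function.update (fun i => z i) l t j = c t j
        rw [Function.update_apply]
        by_cases hj : j = l
        · rw [if_pos hj, hj]
          exact (hcl t).symm
        · rw [if_neg hj, hcdef]
          show z j = z j + t • (EuclideanSpace.single l (1 : ℝ)) j
          rw [EuclideanSpace.single_apply, if_neg hj, smul_eq_mul, mul_zero, add_zero]
      have hcont : Continuous c := by
        rw [hcdef]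
        exact continuous_const.add (continuous_id.smul continuous_const)
      have hcd : HasDerivAt c (EuclideanSpace.single l (1 : ℝ)) 0 := by
        have h1 : HasDerivAt (fun t : ℝ => t • EuclideanSpace.single l (1 : ℝ))
            ((1 : ℝ) • EuclideanSpace.single l (1 : ℝ)) 0 :=
          (hasDerivAt_id 0).smul_const _
        rw [one_smul] at h1
        exact h1.const_add z
      have hqz : AnalyticAt ℝ q z := (hball z hzball).2
      have hfd : HasFDerivAt q (fderiv ℝ q z) (c 0) := by
        rw [hc0]; exact hqz.differentiableAt.hasFDerivAt
      have hqd : HasDerivAt (fun t => q (c t))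
          ((fderiv ℝ q z) (EuclideanSpace.single l (1 : ℝ))) 0 :=
        hfd.comp_hasDerivAt 0 hcd
      have hmul : HasDerivAt (fun t => t * q (c t)) (q z) 0 := by
        have h := (hasDerivAt_id 0).fun_mul hqd
        simpa [hc0] using h
      have hevq : (fun t : ℝ => X (c t) l) =ᶠ[nhds 0] fun t => t * q (c t) := by
        have hcball : ∀ᶠ t in nhds (0:ℝ), c t ∈ Metric.ball x ε := by
          have hca : ContinuousAt c 0 := hcont.continuousAt
          have hmem : Metric.ball x ε ∈ nhds (c 0) := by
            rw [hc0]
            exact Metric.isOpen_ball.mem_nhds hzball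
          exact hca.preimage_mem_nhds hmem
        filter_upwards [hcball] with t ht
        rw [(hball (c t) ht).1, hcl t]
      have : HasDerivAt (fun t : ℝ => X (c t) l) (q z) 0 :=
        hmul.congr_of_eventuallyEq hevq
      rw [hLdef]
      show deriv (fun t : ℝ => X (WithLp.toLp 2 (Function.update (fun i => z i) l t)) l) 0 = q z
      rw [hLc]
      exact this.deriv
    -- G agrees with q ∘ φ near x
    have hGev : (fun z : EuclideanSpace ℝ (Fin n) => q (φ z)) =ᶠ[nhds x] G := by
      have hpre : φ ⁻¹' (Metric.ball x ε) ∈ nhds x := by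
        apply (hφana x).continuousAt.preimage_mem_nhds
        rw [hφx]
        exact Metric.ball_mem_nhds _ hε
      filter_upwards [hpre, Metric.ball_mem_nhds x hε] with z hz1 hz2
      by_cases hz0 : z l = 0
      · rw [hGdef]
        show q (φ z) = if z l = 0 then L z else _
        rw [if_pos hz0, hLq z hz0 hz2, hφfix z hz0]
      · rw [hGpos z hz0]
        have h1 : X (φ z) l = (φ z) l * q (φ z) := (hball (φ z) hz1).1
        rw [h1, hφlast z]
        rw [inv_mul_cancel_left₀ (pow_ne_zero p hz0)]
    have hqφ : AnalyticAt ℝ (fun z : EuclideanSpace ℝ (Fin n) => q (φ z)) x := by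
      apply AnalyticAt.comp _ (hφana x)
      rw [hφx]
      exact hq
    exact hqφ.congr hGev
  -- assemble the vector field
  set Y : EuclideanSpace ℝ (Fin n) → EuclideanSpace ℝ (Fin n) := fun x => ∑ i : Fin n,
    (if i = l then (p : ℝ)⁻¹ * x l * G x else X (φ x) i) • EuclideanSpace.single i (1 : ℝ)
    with hYdef
  have hYcoord : ∀ (x : EuclideanSpace ℝ (Fin n)) (j : Fin n),
      Y x j = if j = l then (p : ℝ)⁻¹ * x l * G x else X (φ x) j := by
    intro x j
    exact sum_single_coord (fun i => if i = l then (p : ℝ)⁻¹ * x l * G x else X (φ x) i) j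
  refine ⟨Y, ?_, ?_⟩
  · intro x hx
    apply analyticAt_of_coords
    intro i
    have hrw : (fun z : EuclideanSpace ℝ (Fin n) => Y z i)
        = fun z : EuclideanSpace ℝ (Fin n) => if i = l then (p : ℝ)⁻¹ * z l * G z else X (φ z) i := by
      funext z; rw [hYcoord]
    rw [hrw]
    by_cases hi : i = l
    · simp only [if_pos hi]
      have hG : AnalyticAt ℝ G x := by
        have hx' : (0:ℝ) ≤ x l := hx
        rcases lt_or_eq_of_le hx' with h | h
        · exact hGint x hx h
        · exact hGbd x hx h.symm
      exact (analyticAt_const.mul (coordAnalytic l x)).mul hG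
    · simp only [if_neg hi]
      exact (coordAnalytic i _).comp ((hX (φ x) (hφmem x hx)).comp (hφana x))
  · intro x hxl
    constructor
    · intro i hi
      rw [hYcoord, if_neg hi]
    · rw [hYcoord, if_pos rfl, hGpos x (ne_of_gt hxl)]
      have hz : (x l) ^ ((1 : ℤ) - (p : ℤ)) = x l * ((x l) ^ p)⁻¹ := by
        rw [zpow_sub₀ (ne_of_gt hxl), zpow_one, zpow_natCast]
        rfl
      rw [hz]
      ring


end
end
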